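/- Let k be a field and let P ∈ k⟦t⟧ be a formal power series with P(0) = 0 and P ≠ 0. Let a₁, ..., a_m be positive integers with gcd(a₁, ..., a_m) = 1 and let n ≥ m. Then the element f = P(t) - x₁^{a₁}···x_m^{a_m} is irreducible in the formal power series ring k⟦x₁, ..., x_n, t⟧. -/

import Mathlib

/-- The power series `P(t)` viewed in `k⟦x₁, …, x_n, t⟧`, where `t` is the last
variable of `Fin (n+1)`: its coefficient on a monomial supported in the last
variable `t` is the corresponding coefficient of `P`, and is `0` otherwise. -/
noncomputable def seriesInLastVar (k : Type*) [Field k] (n : ℕ)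
    (P : PowerSeries k) : MvPowerSeries (Fin (n + 1)) k :=
  fun e => if e = Finsupp.single (Fin.last n) (e (Fin.last n))
    then PowerSeries.coeff (e (Fin.last n)) P else 0

namespace Stmt12
set_option linter.unusedSectionVars false
set_option maxHeartbeats 1000000

section Generic
variable {k : Type*} [Field k] {σ : Type*} [DecidableEq σ]
noncomputable def pinit (u : (σ →₀ ℕ) → ℤ) (c : ℤ) (g : MvPowerSeries σ k) :
    MvPowerSeries σ k :=
  fun e => if u e = c then MvPowerSeries.coeff e g else 0

lemma coeff_pinit (u : (σ →₀ ℕ) → ℤ) (c : ℤ) (g : MvPowerSeries σ k) (e : σ →₀ ℕ) :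
    MvPowerSeries.coeff e (pinit u c g) = if u e = c then MvPowerSeries.coeff e g else 0 :=
  rfl

lemma pinit_ne_zero (u : (σ →₀ ℕ) → ℤ) (c : ℤ) (g : MvPowerSeries σ k) (e : σ →₀ ℕ)
    (he : MvPowerSeries.coeff e g ≠ 0) (hue : u e = c) : pinit u c g ≠ 0 := by
  intro h
  have := congrArg (MvPowerSeries.coeff e) h
  rw [coeff_pinit, if_pos hue, map_zero] at this
  exact he this

lemma pinit_mul (u : (σ →₀ ℕ) → ℤ) (hu : ∀ p q, u (p + q) = u p + u q)
    (g h : MvPowerSeries σ k) (c₁ c₂ : ℤ)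
    (hg : ∀ e, MvPowerSeries.coeff e g ≠ 0 → c₁ ≤ u e)
    (hh : ∀ e, MvPowerSeries.coeff e h ≠ 0 → c₂ ≤ u e) :
    pinit u c₁ g * pinit u c₂ h = pinit u (c₁ + c₂) (g * h) := by
  ext e
  rw [coeff_pinit, MvPowerSeries.coeff_mul]
  split_ifs with h1
  · rw [MvPowerSeries.coeff_mul]
    refine Finset.sum_congr rfl ?_
    rintro ⟨p, q⟩ hpq
    have hpq' : p + q = e := Finset.HasAntidiagonal.mem_antidiagonal.mp hpq
    simp only [coeff_pinit]
    by_cases hp : u p = c₁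
    · have hq : u q = c₂ := by
        have := hu p q; rw [hpq', h1, hp] at this; omega
      rw [if_pos hp, if_pos hq]
    · rw [if_neg hp, zero_mul]
      by_cases hgp : MvPowerSeries.coeff p g = 0
      · rw [hgp, zero_mul]
      · have h1' : c₁ < u p := lt_of_le_of_ne (hg p hgp) (Ne.symm hp)
        have : MvPowerSeries.coeff q h = 0 := by
          by_contra hq0
          have := hh q hq0
          have := hu p q; rw [hpq', h1] at this; omega
        rw [this, mul_zero]
  · refine Finset.sum_eq_zero ?_
    rintro ⟨p, q⟩ hpq
    have hpq' : p + q = e := Finset.HasAntidiagonal.mem_antidiagonal.mp hpq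
    simp only [coeff_pinit]
    by_cases hp : u p = c₁
    · have hq : u q ≠ c₂ := by
        intro hq
        apply h1
        have := hu p q; rw [hpq', hp, hq] at this; omega
      rw [if_neg hq, mul_zero]
    · rw [if_neg hp, zero_mul]

lemma mul_lb (u : (σ →₀ ℕ) → ℤ) (hu : ∀ p q, u (p + q) = u p + u q)
    (g h : MvPowerSeries σ k) (c₁ c₂ : ℤ)
    (hg : ∀ e, MvPowerSeries.coeff e g ≠ 0 → c₁ ≤ u e)
    (hh : ∀ e, MvPowerSeries.coeff e h ≠ 0 → c₂ ≤ u e) :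
    ∀ e, MvPowerSeries.coeff e (g * h) ≠ 0 → c₁ + c₂ ≤ u e := by
  intro e he
  rw [MvPowerSeries.coeff_mul] at he
  obtain ⟨⟨p, q⟩, hpq, hne⟩ := Finset.exists_ne_zero_of_sum_ne_zero he
  have hpq' : p + q = e := Finset.HasAntidiagonal.mem_antidiagonal.mp hpq
  have h1 : c₁ ≤ u p := hg p (fun h0 => hne (by rw [h0, zero_mul]))
  have h2 : c₂ ≤ u q := hh q (fun h0 => hne (by rw [h0, mul_zero]))
  have := hu p q; rw [hpq'] at this; omega

/-- attained minimum of `u` over the (finite, nonempty) support. -/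
lemma exists_min (u : (σ →₀ ℕ) → ℤ) (g : MvPowerSeries σ k)
    (hf : {e | MvPowerSeries.coeff e g ≠ 0}.Finite) (hne : g ≠ 0) :
    ∃ c : ℤ, (∀ e, MvPowerSeries.coeff e g ≠ 0 → c ≤ u e) ∧
      ∃ e, MvPowerSeries.coeff e g ≠ 0 ∧ u e = c := by
  have hex : ∃ e, MvPowerSeries.coeff e g ≠ 0 := by
    by_contra hcon
    push_neg at hcon
    exact hne (MvPowerSeries.ext fun e => by rw [hcon e, map_zero])
  have hne' : (hf.toFinset.image u).Nonempty := by
    obtain ⟨e, he⟩ := hex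
    exact ⟨u e, Finset.mem_image_of_mem u (hf.mem_toFinset.mpr he)⟩
  refine ⟨(hf.toFinset.image u).min' hne', ?_, ?_⟩
  · intro e he
    exact Finset.min'_le _ _ (Finset.mem_image_of_mem u (hf.mem_toFinset.mpr he))
  · have := (hf.toFinset.image u).min'_mem hne'
    obtain ⟨e, he, hue⟩ := Finset.mem_image.mp this
    exact ⟨e, hf.mem_toFinset.mp he, hue⟩

lemma mul_single_supp (G H : MvPowerSeries σ k) (γ : σ →₀ ℕ)
    (hγ : ∀ e, MvPowerSeries.coeff e H ≠ 0 → e = γ) (e : σ →₀ ℕ) :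
    MvPowerSeries.coeff e (G * H) =
      if γ ≤ e then MvPowerSeries.coeff (e - γ) G * MvPowerSeries.coeff γ H else 0 := by
  classical
  rw [MvPowerSeries.coeff_mul]
  split_ifs with hle
  · refine Finset.sum_eq_single_of_mem (e - γ, γ)
      (Finset.HasAntidiagonal.mem_antidiagonal.mpr (tsub_add_cancel_of_le hle)) ?_
    rintro ⟨p, q⟩ hpq hne
    have hpq' : p + q = e := Finset.HasAntidiagonal.mem_antidiagonal.mp hpq
    by_cases hq : MvPowerSeries.coeff q H = 0
    · rw [hq, mul_zero]
    · exfalso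
      have hqγ : q = γ := hγ q hq
      subst hqγ
      exact hne (by rw [eq_tsub_of_add_eq hpq'])
  · refine Finset.sum_eq_zero ?_
    rintro ⟨p, q⟩ hpq
    have hpq' : p + q = e := Finset.HasAntidiagonal.mem_antidiagonal.mp hpq
    by_cases hq : MvPowerSeries.coeff q H = 0
    · rw [hq, mul_zero]
    · exfalso
      have hqγ : q = γ := hγ q hq
      subst hqγ
      exact hle (hpq' ▸ le_add_self)


lemma exists_coeff_ne_zero (g : MvPowerSeries σ k) (hne : g ≠ 0) :
    ∃ e, MvPowerSeries.coeff e g ≠ 0 := by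
  by_contra hcon
  push_neg at hcon
  exact hne (MvPowerSeries.ext fun e => by rw [hcon e, map_zero])

end Generic

variable {m n : ℕ}

noncomputable def iota (hmn : m ≤ n) : Fin m → Fin (n + 1) :=
  fun i => Fin.castSucc (Fin.castLE hmn i)

lemma iota_injective (hmn : m ≤ n) : Function.Injective (iota hmn) := by
  intro i j h
  have : ((iota hmn i : Fin (n+1)) : ℕ) = ((iota hmn j : Fin (n+1)) : ℕ) := by rw [h]
  simpa [iota, Fin.ext_iff] using this

lemma iota_ne_last (hmn : m ≤ n) (i : Fin m) : iota hmn i ≠ Fin.last n :=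
  (Fin.castSucc_lt_last _).ne

noncomputable def e0v (hmn : m ≤ n) (a : Fin m → ℕ) : Fin (n + 1) →₀ ℕ :=
  ∑ i, Finsupp.single (iota hmn i) (a i)

lemma e0v_apply_iota (hmn : m ≤ n) (a : Fin m → ℕ) (i : Fin m) :
    e0v hmn a (iota hmn i) = a i := by
  rw [e0v, Finsupp.finset_sum_apply]
  simp only [Finsupp.single_apply, (iota_injective hmn).eq_iff]
  simp

lemma e0v_apply_ne (hmn : m ≤ n) (a : Fin m → ℕ) (j : Fin (n+1)) (hj : ∀ i, j ≠ iota hmn i) :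
    e0v hmn a j = 0 := by
  rw [e0v, Finsupp.finset_sum_apply]
  refine Finset.sum_eq_zero fun i _ => ?_
  rw [Finsupp.single_apply, if_neg (fun h => hj i h.symm)]

lemma e0v_apply_last (hmn : m ≤ n) (a : Fin m → ℕ) : e0v hmn a (Fin.last n) = 0 :=
  e0v_apply_ne hmn a _ (fun i h => iota_ne_last hmn i h.symm)

noncomputable def detv (n d : ℕ) : Fin (n + 1) →₀ ℕ := Finsupp.single (Fin.last n) d

lemma detv_apply (d : ℕ) (j : Fin (n+1)) :
    detv n d j = if j = Fin.last n then d else 0 := by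
  rw [detv, Finsupp.single_apply]
  simp [eq_comm]

noncomputable def vz (hmn : m ≤ n) (a : Fin m → ℕ) (d : ℕ) : Fin (n + 1) → ℤ :=
  fun j => (e0v hmn a j : ℤ) - if j = Fin.last n then (d : ℤ) else 0

lemma vz_iota (hmn : m ≤ n) (a : Fin m → ℕ) (d : ℕ) (i : Fin m) :
    vz hmn a d (iota hmn i) = (a i : ℤ) := by
  rw [vz, e0v_apply_iota, if_neg (iota_ne_last hmn i), sub_zero]

lemma vz_last (hmn : m ≤ n) (a : Fin m → ℕ) (d : ℕ) :
    vz hmn a d (Fin.last n) = -(d : ℤ) := by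
  rw [vz, e0v_apply_last, if_pos rfl]; simp

lemma e0v_coords (hmn : m ≤ n) (a : Fin m → ℕ) (d : ℕ) (j : Fin (n+1)) :
    (e0v hmn a j : ℤ) = vz hmn a d j + (detv n d j : ℤ) := by
  rw [vz, detv_apply]
  split_ifs with h <;> push_cast <;> ring

/-- Key lattice lemma: a vector whose cross products with `vz` all vanish is an
integer multiple of `vz`; uses `gcd a = 1`. -/
lemma collinear (hmn : m ≤ n) (a : Fin m → ℕ) (hgcd : Finset.univ.gcd a = 1)
    (d : ℕ) (hd : 0 < d) (w : Fin (n+1) → ℤ)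
    (hcross : ∀ i j, vz hmn a d i * w j = vz hmn a d j * w i) :
    ∃ α : ℤ, ∀ j, w j = α * vz hmn a d j := by
  have hdz : (d : ℤ) ≠ 0 := by exact_mod_cast hd.ne'
  have hdvd : (d : ℤ) ∣ w (Fin.last n) := by
    have h2 : ∀ i : Fin m, d ∣ a i * (w (Fin.last n)).natAbs := by
      intro i
      have h1 : (d : ℤ) ∣ (a i : ℤ) * w (Fin.last n) := by
        have := hcross (iota hmn i) (Fin.last n)
        rw [vz_iota, vz_last] at this
        exact ⟨-(w (iota hmn i)), by linarith⟩
      have := Int.natAbs_dvd_natAbs.mpr h1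
      simpa [Int.natAbs_mul] using this
    have h3 : d ∣ Finset.univ.gcd (fun i : Fin m => a i * (w (Fin.last n)).natAbs) :=
      Finset.dvd_gcd (fun i _ => h2 i)
    rw [Finset.gcd_mul_right, hgcd] at h3
    simp only [one_mul, normalize_eq] at h3
    exact Int.dvd_natAbs.mp (by exact_mod_cast h3)
  refine ⟨-(w (Fin.last n) / d), fun j => ?_⟩
  by_cases hj : j = Fin.last n
  · subst hj
    rw [vz_last]
    have : -(w (Fin.last n) / ↑d) * -(d:ℤ) = (w (Fin.last n) / ↑d) * d := by ring
    rw [this, Int.ediv_mul_cancel hdvd]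
  · have h4 := hcross j (Fin.last n)
    rw [vz_last] at h4
    apply mul_left_cancel₀ (neg_ne_zero.mpr hdz)
    rw [← h4]
    have : -(d:ℤ) * (-(w (Fin.last n) / ↑d) * vz hmn a d j) =
        vz hmn a d j * ((w (Fin.last n) / ↑d) * d) := by ring
    rw [this, Int.ediv_mul_cancel hdvd]

open MvPowerSeries Classical in
/-- coefficients of the binomial `c t^d - x^a`. -/
noncomputable def bcoef {k : Type*} [Field k] (hmn : m ≤ n) (a : Fin m → ℕ) (d : ℕ) (c : k) :
    (Fin (n+1) →₀ ℕ) → k :=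
  fun e => if e = detv n d then c else if e = e0v hmn a then -1 else 0

section Field
variable {k : Type*} [Field k]

lemma detv_last (d : ℕ) : detv n d (Fin.last n) = d := by
  rw [detv, Finsupp.single_eq_same]

lemma e0v_ne_detv (hmn : m ≤ n) (a : Fin m → ℕ) {d : ℕ} (hd : 0 < d) :
    e0v hmn a ≠ detv n d := by
  intro h
  have h2 := congrArg (fun f : Fin (n+1) →₀ ℕ => f (Fin.last n)) h
  rw [e0v_apply_last, detv_last] at h2
  omega

lemma bcoef_detv (hmn : m ≤ n) (a : Fin m → ℕ) (d : ℕ) (c : k) :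
    bcoef hmn a d c (detv n d) = c := by rw [bcoef, if_pos rfl]

lemma bcoef_e0v (hmn : m ≤ n) (a : Fin m → ℕ) {d : ℕ} (hd : 0 < d) (c : k) :
    bcoef hmn a d c (e0v hmn a) = -1 := by
  rw [bcoef, if_neg (e0v_ne_detv hmn a hd), if_pos rfl]

lemma bcoef_supp (hmn : m ≤ n) (a : Fin m → ℕ) (d : ℕ) (c : k) (e : Fin (n+1) →₀ ℕ)
    (he : bcoef hmn a d c e ≠ 0) : e = detv n d ∨ e = e0v hmn a := by
  rw [bcoef] at he
  by_cases h1 : e = detv n d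
  · exact Or.inl h1
  by_cases h2 : e = e0v hmn a
  · exact Or.inr h2
  · rw [if_neg h1, if_neg h2] at he; exact absurd rfl he

end Field


section PartB
open MvPowerSeries
variable {k : Type*} [Field k]

noncomputable def ucross (hmn : m ≤ n) (a : Fin m → ℕ) (d : ℕ) (i j : Fin (n+1)) :
    (Fin (n+1) →₀ ℕ) → ℤ :=
  fun e => vz hmn a d i * (e j : ℤ) - vz hmn a d j * (e i : ℤ)

lemma ucross_add (hmn : m ≤ n) (a : Fin m → ℕ) (d : ℕ) (i j : Fin (n+1)) :
    ∀ p q, ucross hmn a d i j (p + q) = ucross hmn a d i j p + ucross hmn a d i j q := by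
  intro p q
  simp only [ucross, Finsupp.add_apply]
  push_cast
  ring

lemma ucross_e0v_detv (hmn : m ≤ n) (a : Fin m → ℕ) (d : ℕ) (i j : Fin (n+1)) :
    ucross hmn a d i j (e0v hmn a) = ucross hmn a d i j (detv n d) := by
  simp only [ucross]
  rw [e0v_coords hmn a d j, e0v_coords hmn a d i]
  push_cast
  ring

lemma shrink (hmn : m ≤ n) (a : Fin m → ℕ) {d : ℕ} (hd : 0 < d) {c : k} (hc : c ≠ 0)
    (G H : MvPowerSeries (Fin (n+1)) k)
    (hGf : {e | coeff e G ≠ 0}.Finite) (hHf : {e | coeff e H ≠ 0}.Finite)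
    (hmul : ∀ e, coeff e (G * H) = bcoef hmn a d c e)
    (hG0 : coeff 0 G = 0) (hH0 : coeff 0 H = 0)
    (p q : Fin (n+1) →₀ ℕ) (hp : coeff p G ≠ 0) (hq : coeff q G ≠ 0)
    (i j : Fin (n+1))
    (hij : vz hmn a d i * ((p j : ℤ) - q j) ≠ vz hmn a d j * ((p i : ℤ) - q i)) :
    ∃ (G' H' : MvPowerSeries (Fin (n+1)) k)
      (hG'f : {e | coeff e G' ≠ 0}.Finite) (hH'f : {e | coeff e H' ≠ 0}.Finite),
      hG'f.toFinset.card + hH'f.toFinset.card < hGf.toFinset.card + hHf.toFinset.card ∧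
      (∀ e, coeff e (G' * H') = bcoef hmn a d c e) ∧
      coeff 0 G' = 0 ∧ coeff 0 H' = 0 := by
  classical
  set u : (Fin (n+1) →₀ ℕ) → ℤ := ucross hmn a d i j with hu_def
  have hu := ucross_add hmn a d i j
  have hGne : G ≠ 0 := by
    intro h0
    have := hmul (detv n d)
    rw [h0, zero_mul, map_zero, bcoef_detv] at this
    exact hc this.symm
  have hHne : H ≠ 0 := by
    intro h0
    have := hmul (detv n d)
    rw [h0, mul_zero, map_zero, bcoef_detv] at this
    exact hc this.symm
  obtain ⟨c₁, lb₁, e₁, he₁, hue₁⟩ := exists_min u G hGf hGne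
  obtain ⟨c₂, lb₂, e₂, he₂, hue₂⟩ := exists_min u H hHf hHne
  have hdet_e0 : u (detv n d) = u (e0v hmn a) := by
    rw [hu_def]; exact (ucross_e0v_detv hmn a d i j).symm
  have hupq : u p ≠ u q := by
    intro h
    apply hij
    simp only [hu_def, ucross] at h
    linear_combination h
  set G' := pinit u c₁ G with hG'
  set H' := pinit u c₂ H with hH'
  have hprod : G' * H' = pinit u (c₁ + c₂) (G * H) := pinit_mul u hu G H c₁ c₂ lb₁ lb₂
  have hβ : c₁ + c₂ = u (e0v hmn a) := by
    have hle : c₁ + c₂ ≤ u (e0v hmn a) := by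
      apply mul_lb u hu G H c₁ c₂ lb₁ lb₂
      rw [hmul, bcoef_e0v hmn a hd]
      exact neg_ne_zero.mpr one_ne_zero
    have hne : G' * H' ≠ 0 :=
      mul_ne_zero (pinit_ne_zero u c₁ G e₁ he₁ hue₁) (pinit_ne_zero u c₂ H e₂ he₂ hue₂)
    rw [hprod] at hne
    obtain ⟨e, he⟩ := exists_coeff_ne_zero _ hne
    rw [coeff_pinit] at he
    by_cases hcase : u e = c₁ + c₂
    · rw [if_pos hcase] at he
      rw [hmul] at he
      rcases bcoef_supp hmn a d c e he with h | h
      · subst h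
        rw [hdet_e0] at hcase
        exact hcase.symm
      · subst h
        exact hcase.symm
    · rw [if_neg hcase] at he
      exact absurd rfl he
  have hmul' : ∀ e, coeff e (G' * H') = bcoef hmn a d c e := by
    intro e
    rw [hprod, coeff_pinit]
    by_cases hcase : u e = c₁ + c₂
    · rw [if_pos hcase, hmul]
    · rw [if_neg hcase]
      by_contra hb
      have hb' : bcoef hmn a d c e ≠ 0 := fun h => hb h.symm
      rcases bcoef_supp hmn a d c e hb' with h | h
      · subst h
        exact hcase (by rw [hdet_e0, ← hβ])
      · subst h
        exact hcase hβ.symm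
  have hsubG : {e | coeff e G' ≠ 0} ⊆ {e | coeff e G ≠ 0} := by
    intro e he
    simp only [Set.mem_setOf_eq, hG', coeff_pinit] at he ⊢
    by_cases hcase : u e = c₁
    · rwa [if_pos hcase] at he
    · rw [if_neg hcase] at he; exact absurd rfl he
  have hsubH : {e | coeff e H' ≠ 0} ⊆ {e | coeff e H ≠ 0} := by
    intro e he
    simp only [Set.mem_setOf_eq, hH', coeff_pinit] at he ⊢
    by_cases hcase : u e = c₂
    · rwa [if_pos hcase] at he
    · rw [if_neg hcase] at he; exact absurd rfl he
  have hG'f : {e | coeff e G' ≠ 0}.Finite := hGf.subset hsubG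
  have hH'f : {e | coeff e H' ≠ 0}.Finite := hHf.subset hsubH
  -- a point of supp G missing from supp G'
  obtain ⟨r, hr, hur⟩ : ∃ r, coeff r G ≠ 0 ∧ u r ≠ c₁ := by
    by_cases hcase : u p = c₁
    · exact ⟨q, hq, fun h => hupq (by rw [hcase, h])⟩
    · exact ⟨p, hp, hcase⟩
  have hrnot : coeff r G' = 0 := by
    rw [hG', coeff_pinit, if_neg hur]
  refine ⟨G', H', hG'f, hH'f, ?_, hmul', ?_, ?_⟩
  · have h1 : hG'f.toFinset.card < hGf.toFinset.card := by
      apply Finset.card_lt_card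
      rw [Finset.ssubset_iff_of_subset (Set.Finite.toFinset_subset_toFinset.mpr hsubG)]
      exact ⟨r, hGf.mem_toFinset.mpr hr, fun hmem => (hG'f.mem_toFinset.mp hmem) hrnot⟩
    have h2 : hH'f.toFinset.card ≤ hHf.toFinset.card :=
      Finset.card_le_card (Set.Finite.toFinset_subset_toFinset.mpr hsubH)
    omega
  · rw [hG', coeff_pinit]
    split_ifs <;> simp [hG0]
  · rw [hH', coeff_pinit]
    split_ifs <;> simp [hH0]

lemma partB (hmn : m ≤ n) (a : Fin m → ℕ) (hgcd : Finset.univ.gcd a = 1)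
    {d : ℕ} (hd : 0 < d) {c : k} (hc : c ≠ 0) :
    ∀ N : ℕ, ∀ (G H : MvPowerSeries (Fin (n+1)) k)
      (hGf : {e | coeff e G ≠ 0}.Finite) (hHf : {e | coeff e H ≠ 0}.Finite),
      hGf.toFinset.card + hHf.toFinset.card ≤ N →
      (∀ e, coeff e (G * H) = bcoef hmn a d c e) →
      coeff 0 G = 0 → coeff 0 H = 0 → False := by
  have hne00 : ∀ (G H : MvPowerSeries (Fin (n+1)) k),
      (∀ e, coeff e (G * H) = bcoef hmn a d c e) → G ≠ 0 := by
    intro G H hmul h0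
    have := hmul (detv n d)
    rw [h0, zero_mul, map_zero, bcoef_detv] at this
    exact hc this.symm
  intro N
  induction N with
  | zero =>
    intro G H hGf hHf hcard hmul hG0 hH0
    have hGne : G ≠ 0 := hne00 G H hmul
    apply hGne
    ext e
    rw [map_zero]
    by_contra hce
    have : e ∈ hGf.toFinset := hGf.mem_toFinset.mpr hce
    have h1 : hGf.toFinset.card = 0 := by omega
    rw [Finset.card_eq_zero] at h1
    rw [h1] at this
    exact absurd this (Finset.notMem_empty e)
  | succ N ih =>
    intro G H hGf hHf hcard hmul hG0 hH0
    have hGne : G ≠ 0 := hne00 G H hmul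
    have hHne : H ≠ 0 := by
      apply hne00 H G
      intro e
      rw [mul_comm]
      exact hmul e
    by_cases hbadG : ∃ p q, coeff p G ≠ 0 ∧ coeff q G ≠ 0 ∧ ∃ i j,
        vz hmn a d i * ((p j : ℤ) - q j) ≠ vz hmn a d j * ((p i : ℤ) - q i)
    · obtain ⟨p, q, hp, hq, i, j, hij⟩ := hbadG
      obtain ⟨G', H', hG'f, hH'f, hlt, hmul', hG0', hH0'⟩ :=
        shrink hmn a hd hc G H hGf hHf hmul hG0 hH0 p q hp hq i j hij
      exact ih G' H' hG'f hH'f (by omega) hmul' hG0' hH0'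
    by_cases hbadH : ∃ p q, coeff p H ≠ 0 ∧ coeff q H ≠ 0 ∧ ∃ i j,
        vz hmn a d i * ((p j : ℤ) - q j) ≠ vz hmn a d j * ((p i : ℤ) - q i)
    · obtain ⟨p, q, hp, hq, i, j, hij⟩ := hbadH
      have hmulHG : ∀ e, coeff e (H * G) = bcoef hmn a d c e := by
        intro e; rw [mul_comm]; exact hmul e
      obtain ⟨H', G', hH'f, hG'f, hlt, hmul', hH0', hG0'⟩ :=
        shrink hmn a hd hc H G hHf hGf hmulHG hH0 hG0 p q hp hq i j hij
      exact ih H' G' hH'f hG'f (by omega) hmul' hH0' hG0'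
    push_neg at hbadG hbadH
    -- monomial case for H
    by_cases hHsing : ∀ p' q', coeff p' H ≠ 0 → coeff q' H ≠ 0 → p' = q'
    · obtain ⟨γ, hγc⟩ := exists_coeff_ne_zero H hHne
      have hγ : ∀ e, coeff e H ≠ 0 → e = γ := fun e he => hHsing e γ he hγc
      have hdet := hmul (detv n d)
      rw [mul_single_supp G H γ hγ, bcoef_detv] at hdet
      have hγdet : γ ≤ detv n d := by
        by_contra hcon
        rw [if_neg hcon] at hdet
        exact hc hdet.symm
      have he0 := hmul (e0v hmn a)
      rw [mul_single_supp G H γ hγ, bcoef_e0v hmn a hd] at he0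
      have hγe0 : γ ≤ e0v hmn a := by
        by_contra hcon
        rw [if_neg hcon] at he0
        exact (neg_ne_zero.mpr one_ne_zero) he0.symm
      have hγ0 : γ = 0 := by
        have hall : ∀ jj, γ jj = 0 := by
          intro jj
          rcases eq_or_ne jj (Fin.last n) with h | h
          · subst h
            have h2 := Finsupp.le_def.mp hγe0 (Fin.last n)
            rw [e0v_apply_last] at h2
            omega
          · have h2 := Finsupp.le_def.mp hγdet jj
            rw [detv_apply, if_neg h] at h2
            omega
        exact Finsupp.ext fun jj => by rw [hall jj]; rfl
      rw [hγ0] at hγc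
      exact hγc hH0
    by_cases hGsing : ∀ p' q', coeff p' G ≠ 0 → coeff q' G ≠ 0 → p' = q'
    · obtain ⟨γ, hγc⟩ := exists_coeff_ne_zero G hGne
      have hγ : ∀ e, coeff e G ≠ 0 → e = γ := fun e he => hGsing e γ he hγc
      have hmulHG : ∀ e, coeff e (H * G) = bcoef hmn a d c e := by
        intro e; rw [mul_comm]; exact hmul e
      have hdet := hmulHG (detv n d)
      rw [mul_single_supp H G γ hγ, bcoef_detv] at hdet
      have hγdet : γ ≤ detv n d := by
        by_contra hcon
        rw [if_neg hcon] at hdet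
        exact hc hdet.symm
      have he0 := hmulHG (e0v hmn a)
      rw [mul_single_supp H G γ hγ, bcoef_e0v hmn a hd] at he0
      have hγe0 : γ ≤ e0v hmn a := by
        by_contra hcon
        rw [if_neg hcon] at he0
        exact (neg_ne_zero.mpr one_ne_zero) he0.symm
      have hγ0 : γ = 0 := by
        have hall : ∀ jj, γ jj = 0 := by
          intro jj
          rcases eq_or_ne jj (Fin.last n) with h | h
          · subst h
            have h2 := Finsupp.le_def.mp hγe0 (Fin.last n)
            rw [e0v_apply_last] at h2
            omega
          · have h2 := Finsupp.le_def.mp hγdet jj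
            rw [detv_apply, if_neg h] at h2
            omega
        exact Finsupp.ext fun jj => by rw [hall jj]; rfl
      rw [hγ0] at hγc
      exact hγc hG0
    -- both have at least two support points: use the t-degree functional
    push_neg at hHsing hGsing
    set us : (Fin (n+1) →₀ ℕ) → ℤ := fun e => -((e (Fin.last n) : ℤ)) with hus_def
    have hus : ∀ p q, us (p + q) = us p + us q := by
      intro p q
      simp only [hus_def, Finsupp.add_apply]
      push_cast
      ring
    obtain ⟨s₁, lb₁, e₁, he₁, hue₁⟩ := exists_min us G hGf hGne
    obtain ⟨s₂, lb₂, e₂, he₂, hue₂⟩ := exists_min us H hHf hHne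
    have husdet : us (detv n d) = -(d : ℤ) := by
      simp only [hus_def, detv_last]
    have huse0 : us (e0v hmn a) = 0 := by
      simp only [hus_def, e0v_apply_last]
      simp
    have hsum : s₁ + s₂ = -(d : ℤ) := by
      have hle : s₁ + s₂ ≤ -(d : ℤ) := by
        rw [← husdet]
        apply mul_lb us hus G H s₁ s₂ lb₁ lb₂
        rw [hmul, bcoef_detv]
        exact hc
      have hne : pinit us s₁ G * pinit us s₂ H ≠ 0 :=
        mul_ne_zero (pinit_ne_zero us s₁ G e₁ he₁ hue₁) (pinit_ne_zero us s₂ H e₂ he₂ hue₂)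
      rw [pinit_mul us hus G H s₁ s₂ lb₁ lb₂] at hne
      obtain ⟨e, he⟩ := exists_coeff_ne_zero _ hne
      rw [coeff_pinit] at he
      by_cases hcase : us e = s₁ + s₂
      · rw [if_pos hcase, hmul] at he
        rcases bcoef_supp hmn a d c e he with h | h
        · subst h; rw [husdet] at hcase; omega
        · subst h; rw [huse0] at hcase; omega
      · rw [if_neg hcase] at he
        exact absurd rfl he
    have htG : ∀ e, coeff e G ≠ 0 → (e (Fin.last n) : ℤ) ≤ -s₁ := by
      intro e he
      have := lb₁ e he
      simp only [hus_def] at this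
      omega
    have htH : ∀ e, coeff e H ≠ 0 → (e (Fin.last n) : ℤ) ≤ -s₂ := by
      intro e he
      have := lb₂ e he
      simp only [hus_def] at this
      omega
    have htwo : ∀ (K : MvPowerSeries (Fin (n+1)) k) (sK : ℤ),
        (∀ e, coeff e K ≠ 0 → (e (Fin.last n) : ℤ) ≤ -sK) →
        (∀ p q, coeff p K ≠ 0 → coeff q K ≠ 0 → ∀ i j,
          vz hmn a d i * ((p j : ℤ) - q j) = vz hmn a d j * ((p i : ℤ) - q i)) →
        ∀ p q, coeff p K ≠ 0 → coeff q K ≠ 0 → p ≠ q → (d : ℤ) ≤ -sK := by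
      intro K sK htK hgood p q hp hq hpq
      obtain ⟨α, hα⟩ := collinear hmn a hgcd d hd (fun j => (p j : ℤ) - q j)
        (hgood p q hp hq)
      have hα0 : α ≠ 0 := by
        intro h0
        apply hpq
        apply Finsupp.ext
        intro jj
        have := hα jj
        rw [h0, zero_mul] at this
        omega
      have hlast := hα (Fin.last n)
      rw [vz_last] at hlast
      have h1 := htK p hp
      have h2 := htK q hq
      have hp0 : (0:ℤ) ≤ (p (Fin.last n) : ℤ) := Int.natCast_nonneg _
      have hq0 : (0:ℤ) ≤ (q (Fin.last n) : ℤ) := Int.natCast_nonneg _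
      rcases lt_or_gt_of_ne hα0 with h | h
      · have hd' : (d:ℤ) ≤ (p (Fin.last n) : ℤ) := by nlinarith
        linarith
      · have hd' : (d:ℤ) ≤ (q (Fin.last n) : ℤ) := by nlinarith
        linarith
    obtain ⟨pG, qG, hpG, hqG, hneG⟩ := hGsing
    obtain ⟨pH, qH, hpH, hqH, hneH⟩ := hHsing
    have hG2 := htwo G s₁ htG hbadG pG qG hpG hqG hneG
    have hH2 := htwo H s₂ htH hbadH pH qH hpH hqH hneH
    omega

end PartB

section Main
open MvPowerSeries

theorem stmt_12_aux (k : Type*) [Field k] (m n : ℕ) (hmn : m ≤ n)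
    (a : Fin m → ℕ) (hpos : ∀ i, 0 < a i) (hgcd : Finset.univ.gcd a = 1)
    (P : PowerSeries k) (hP0 : PowerSeries.constantCoeff P = 0) (hP : P ≠ 0) :
    Irreducible (seriesInLastVar k n P -
      MvPowerSeries.monomial
        (∑ i : Fin m, Finsupp.single (Fin.castSucc (Fin.castLE hmn i)) (a i))
        (1 : k)) := by
  classical
  have he0eq : (∑ i : Fin m, Finsupp.single (Fin.castSucc (Fin.castLE hmn i)) (a i))
      = e0v hmn a := rfl
  rw [he0eq]
  set f : MvPowerSeries (Fin (n+1)) k :=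
    seriesInLastVar k n P - MvPowerSeries.monomial (e0v hmn a) (1 : k) with hfdef
  have hm : 0 < m := by
    rcases Nat.eq_zero_or_pos m with h | h
    · subst h
      rw [Finset.univ_eq_empty, Finset.gcd_empty] at hgcd
      exact absurd hgcd (by norm_num)
    · exact h
  have hdex : ∃ i, PowerSeries.coeff i P ≠ 0 := by
    by_contra hcon
    push_neg at hcon
    exact hP (PowerSeries.ext fun i => by rw [hcon i, map_zero])
  set d : ℕ := Nat.find hdex with hddef
  have hdc : PowerSeries.coeff d P ≠ 0 := Nat.find_spec hdex
  have hdmin : ∀ e', PowerSeries.coeff e' P ≠ 0 → d ≤ e' := fun e' h => Nat.find_min' hdex h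
  have hd : 0 < d := by
    rcases Nat.eq_zero_or_pos d with h | h
    · exfalso
      apply hdc
      rw [h, PowerSeries.coeff_zero_eq_constantCoeff, hP0]
    · exact h
  set c : k := PowerSeries.coeff d P with hcdef
  have hc : c ≠ 0 := hdc
  set A : ℕ := ∑ i, a i with hAdef
  have hA : 0 < A := by
    have : Nonempty (Fin m) := ⟨⟨0, hm⟩⟩
    exact Finset.sum_pos (fun i _ => hpos i) Finset.univ_nonempty
  have he0_ne_zero : e0v hmn a ≠ 0 := by
    intro h
    have h2 := congrArg (fun F : Fin (n+1) →₀ ℕ => F (iota hmn ⟨0, hm⟩)) h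
    simp only [e0v_apply_iota, Finsupp.coe_zero, Pi.zero_apply] at h2
    exact (hpos ⟨0, hm⟩).ne' h2
  have hcoeff_f : ∀ e, coeff e f =
      (if e = Finsupp.single (Fin.last n) (e (Fin.last n))
        then PowerSeries.coeff (e (Fin.last n)) P else 0)
      - (if e = e0v hmn a then 1 else 0) := by
    intro e
    rw [hfdef, map_sub, coeff_monomial]
    rfl
  have hf_e0 : coeff (e0v hmn a) f = -1 := by
    rw [hcoeff_f, if_neg, if_pos rfl]
    · ring
    · rw [e0v_apply_last]
      intro h
      exact he0_ne_zero (h.trans (Finsupp.single_zero _))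
  have hdetv_single : detv n d = Finsupp.single (Fin.last n) (detv n d (Fin.last n)) := by
    rw [detv_last]
    rfl
  have hf_det : coeff (detv n d) f = c := by
    rw [hcoeff_f, if_pos hdetv_single, if_neg (Ne.symm (e0v_ne_detv hmn a hd)), detv_last]
    rw [hcdef]
    ring
  have hf_supp : ∀ e, coeff e f ≠ 0 → e = e0v hmn a ∨
      (e = Finsupp.single (Fin.last n) (e (Fin.last n)) ∧ d ≤ e (Fin.last n)) := by
    intro e he
    rw [hcoeff_f] at he
    by_cases h2 : e = e0v hmn a
    · exact Or.inl h2
    right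
    rw [if_neg h2, sub_zero] at he
    by_cases h1 : e = Finsupp.single (Fin.last n) (e (Fin.last n))
    · rw [if_pos h1] at he
      exact ⟨h1, hdmin _ he⟩
    · rw [if_neg h1] at he
      exact absurd rfl he
  have hfne : f ≠ 0 := by
    intro h
    apply hc
    rw [← hf_det, h, map_zero]
  -- the weight function
  set cw : Fin (n+1) → ℕ := fun j => if j = Fin.last n then A else d with hcwdef
  have hcw_pos : ∀ j, 0 < cw j := by
    intro j
    simp only [hcwdef]
    split_ifs
    · exact hA
    · exact hd
  set wn : (Fin (n+1) →₀ ℕ) → ℕ := fun e => ∑ j, cw j * e j with hwndef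
  have hwn_add : ∀ p q, wn (p + q) = wn p + wn q := by
    intro p q
    simp only [hwndef, Finsupp.add_apply, mul_add]
    rw [Finset.sum_add_distrib]
  have hwn_single : ∀ (jj : Fin (n+1)) x, wn (Finsupp.single jj x) = cw jj * x := by
    intro jj x
    simp only [hwndef, Finsupp.single_apply]
    rw [Finset.sum_eq_single jj]
    · rw [if_pos rfl]
    · intro b _ hb
      rw [if_neg (fun h => hb h.symm), mul_zero]
    · intro h
      exact absurd (Finset.mem_univ jj) h
  have hwn_zero : wn 0 = 0 := by
    simp [hwndef]
  have hwn_e0 : wn (e0v hmn a) = d * A := by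
    have hW : wn (e0v hmn a) = ∑ i, wn (Finsupp.single (iota hmn i) (a i)) := by
      let W : (Fin (n+1) →₀ ℕ) →+ ℕ :=
        { toFun := wn, map_zero' := hwn_zero, map_add' := hwn_add }
      exact map_sum W (fun i => Finsupp.single (iota hmn i) (a i)) Finset.univ
    rw [hW]
    have : ∀ i : Fin m, wn (Finsupp.single (iota hmn i) (a i)) = d * a i := by
      intro i
      rw [hwn_single]
      simp only [hcwdef]
      rw [if_neg (iota_ne_last hmn i)]
    rw [Finset.sum_congr rfl (fun i _ => this i), hAdef, Finset.mul_sum]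
  have hwn_det : wn (detv n d) = A * d := by
    rw [detv, hwn_single]
    simp [hcwdef]
  have hwn_lb : ∀ (e : Fin (n+1) →₀ ℕ) jj, e jj ≤ wn e := by
    intro e jj
    simp only [hwndef]
    calc e jj ≤ cw jj * e jj := Nat.le_mul_of_pos_left _ (hcw_pos jj)
    _ ≤ ∑ j, cw j * e j := Finset.single_le_sum (f := fun j => cw j * e j)
        (fun j _ => Nat.zero_le _) (Finset.mem_univ jj)
  set uw : (Fin (n+1) →₀ ℕ) → ℤ := fun e => (wn e : ℤ) with huwdef
  have huw_add : ∀ p q, uw (p + q) = uw p + uw q := by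
    intro p q
    simp only [huwdef]
    exact_mod_cast hwn_add p q
  constructor
  · intro hu
    have hu2 := MvPowerSeries.isUnit_iff_constantCoeff.mp hu
    have h0 : constantCoeff f = 0 := by
      rw [← MvPowerSeries.coeff_zero_eq_constantCoeff_apply, hcoeff_f]
      rw [if_pos (by simp), if_neg (fun h => he0_ne_zero h.symm)]
      simp [hP0]
    rw [h0] at hu2
    exact hu2.ne_zero rfl
  · intro g h hf
    by_contra hcon
    rw [not_or] at hcon
    obtain ⟨hg, hh⟩ := hcon
    have hg0 : coeff 0 g = 0 := by
      by_contra h0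
      apply hg
      rw [MvPowerSeries.isUnit_iff_constantCoeff, ← MvPowerSeries.coeff_zero_eq_constantCoeff_apply]
      exact isUnit_iff_ne_zero.mpr h0
    have hh0 : coeff 0 h = 0 := by
      by_contra h0
      apply hh
      rw [MvPowerSeries.isUnit_iff_constantCoeff, ← MvPowerSeries.coeff_zero_eq_constantCoeff_apply]
      exact isUnit_iff_ne_zero.mpr h0
    have hgne : g ≠ 0 := fun h0 => hfne (by rw [hf, h0, zero_mul])
    have hhne : h ≠ 0 := fun h0 => hfne (by rw [hf, h0, mul_zero])
    -- minimal weights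
    have hex₁ : {t : ℕ | ∃ e, coeff e g ≠ 0 ∧ wn e = t}.Nonempty := by
      obtain ⟨e, he⟩ := exists_coeff_ne_zero g hgne
      exact ⟨wn e, e, he, rfl⟩
    have hex₂ : {t : ℕ | ∃ e, coeff e h ≠ 0 ∧ wn e = t}.Nonempty := by
      obtain ⟨e, he⟩ := exists_coeff_ne_zero h hhne
      exact ⟨wn e, e, he, rfl⟩
    set c₁ : ℕ := sInf {t : ℕ | ∃ e, coeff e g ≠ 0 ∧ wn e = t} with hc₁def
    set c₂ : ℕ := sInf {t : ℕ | ∃ e, coeff e h ≠ 0 ∧ wn e = t} with hc₂def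
    obtain ⟨e₁, he₁, hwe₁⟩ := Nat.sInf_mem hex₁
    obtain ⟨e₂, he₂, hwe₂⟩ := Nat.sInf_mem hex₂
    have lb₁ : ∀ e, coeff e g ≠ 0 → (c₁ : ℤ) ≤ uw e := by
      intro e he
      have : c₁ ≤ wn e := Nat.sInf_le ⟨e, he, rfl⟩
      simp only [huwdef]
      exact_mod_cast this
    have lb₂ : ∀ e, coeff e h ≠ 0 → (c₂ : ℤ) ≤ uw e := by
      intro e he
      have : c₂ ≤ wn e := Nat.sInf_le ⟨e, he, rfl⟩
      simp only [huwdef]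
      exact_mod_cast this
    have hue₁ : uw e₁ = (c₁ : ℤ) := by
      simp only [huwdef]
      exact_mod_cast hwe₁
    have hue₂ : uw e₂ = (c₂ : ℤ) := by
      simp only [huwdef]
      exact_mod_cast hwe₂
    set G := pinit uw (c₁ : ℤ) g with hGdef
    set H := pinit uw (c₂ : ℤ) h with hHdef
    have hprod : G * H = pinit uw ((c₁ : ℤ) + c₂) f := by
      rw [hGdef, hHdef, pinit_mul uw huw_add g h _ _ lb₁ lb₂, ← hf]
    have hGHne : G * H ≠ 0 :=
      mul_ne_zero (pinit_ne_zero uw _ g e₁ he₁ hue₁) (pinit_ne_zero uw _ h e₂ he₂ hue₂)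
    have hsum : (c₁ : ℤ) + c₂ = ((d * A : ℕ) : ℤ) := by
      have hle : (c₁ : ℤ) + c₂ ≤ ((d * A : ℕ) : ℤ) := by
        have h2 := mul_lb uw huw_add g h _ _ lb₁ lb₂ (e0v hmn a)
          (by rw [← hf, hf_e0]; exact neg_ne_zero.mpr one_ne_zero)
        simp only [huwdef, hwn_e0] at h2
        exact h2
      have hge : ((d * A : ℕ) : ℤ) ≤ (c₁ : ℤ) + c₂ := by
        rw [hprod] at hGHne
        obtain ⟨e, he⟩ := exists_coeff_ne_zero _ hGHne
        rw [coeff_pinit] at he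
        by_cases hcase : uw e = (c₁ : ℤ) + c₂
        · rw [if_pos hcase] at he
          rcases hf_supp e he with h1 | ⟨h1, h2⟩
          · subst h1
            rw [← hcase]
            simp only [huwdef, hwn_e0]
            exact le_rfl
          · have hwne : wn e = A * e (Fin.last n) := by
              conv_lhs => rw [h1]
              rw [hwn_single]
              simp [hcwdef]
            have h3 : A * d ≤ A * e (Fin.last n) := Nat.mul_le_mul_left A h2
            rw [← hcase]
            simp only [huwdef, hwne]
            have : d * A = A * d := Nat.mul_comm d A
            rw [this]
            exact_mod_cast h3
        · rw [if_neg hcase] at he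
          exact absurd rfl he
      exact le_antisymm hle hge
    have hwdetA : wn (detv n d) = d * A := by rw [hwn_det, Nat.mul_comm]
    have hmulB : ∀ e, coeff e (G * H) = bcoef hmn a d c e := by
      intro e
      rw [hprod, coeff_pinit]
      by_cases hcase : uw e = (c₁ : ℤ) + c₂
      · rw [if_pos hcase]
        have hwe : wn e = d * A := by
          rw [hsum] at hcase
          simp only [huwdef] at hcase
          exact_mod_cast hcase
        by_cases h1 : e = detv n d
        · rw [h1, hf_det, bcoef_detv]
        by_cases h2 : e = e0v hmn a
        · rw [h2, hf_e0, bcoef_e0v hmn a hd]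
        · have hb0 : bcoef hmn a d c e = 0 := by
            by_contra hb
            rcases bcoef_supp hmn a d c e hb with h | h
            · exact h1 h
            · exact h2 h
          have hf0 : coeff e f = 0 := by
            by_contra hfe
            rcases hf_supp e hfe with h | ⟨h3, h4⟩
            · exact h2 h
            · apply h1
              have hwne : wn e = A * e (Fin.last n) := by
                conv_lhs => rw [h3]
                rw [hwn_single]
                simp [hcwdef]
              have helast : e (Fin.last n) = d := by
                rw [hwne, Nat.mul_comm] at hwe
                exact Nat.eq_of_mul_eq_mul_right hA hwe |>.symm ▸ rfl
              rw [helast] at h3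
              rw [detv]
              exact h3
          rw [hf0, hb0]
      · rw [if_neg hcase]
        symm
        by_contra hb
        rcases bcoef_supp hmn a d c e (fun h => hb h) with h | h
        · subst h
          apply hcase
          rw [hsum]
          simp only [huwdef, hwdetA]
        · subst h
          apply hcase
          rw [hsum]
          simp only [huwdef, hwn_e0]
    have hfinsub : ∀ (K : MvPowerSeries (Fin (n+1)) k) (t : ℕ),
        {e | coeff e (pinit uw (t : ℤ) K) ≠ 0}.Finite := by
      intro K t
      apply Set.Finite.subset
        (Finset.Iic (Finsupp.equivFunOnFinite.symm (fun _ : Fin (n+1) => t))).finite_toSet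
      intro e he
      simp only [Set.mem_setOf_eq, coeff_pinit] at he
      by_cases hcase : uw e = (t : ℤ)
      · have hwe : wn e = t := by
          simp only [huwdef] at hcase
          exact_mod_cast hcase
        simp only [Finset.coe_Iic, Set.mem_Iic]
        rw [Finsupp.le_def]
        intro jj
        have h3 := hwn_lb e jj
        rw [hwe] at h3
        simpa using h3
      · rw [if_neg hcase] at he
        exact absurd rfl he
    have hGf : {e | coeff e G ≠ 0}.Finite := hfinsub g c₁
    have hHf : {e | coeff e H ≠ 0}.Finite := hfinsub h c₂
    have hG0 : coeff 0 G = 0 := by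
      rw [hGdef, coeff_pinit]
      split_ifs <;> simp [hg0]
    have hH0 : coeff 0 H = 0 := by
      rw [hHdef, coeff_pinit]
      split_ifs <;> simp [hh0]
    exact partB hmn a hgcd hd hc (hGf.toFinset.card + hHf.toFinset.card) G H hGf hHf
      le_rfl hmulB hG0 hH0

end Main
end Stmt12

/-- If `P ∈ k⟦t⟧` is a nonzero power series with `P(0) = 0` and `a₁, …, a_m` are
positive integers with `gcd(a₁, …, a_m) = 1`, `m ≤ n`, then
`P(t) - x₁^{a₁} ⋯ x_m^{a_m}` is irreducible in `k⟦x₁, …, x_n, t⟧`. -/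
theorem stmt_12 (k : Type*) [Field k] (m n : ℕ) (hmn : m ≤ n)
    (a : Fin m → ℕ) (hpos : ∀ i, 0 < a i) (hgcd : Finset.univ.gcd a = 1)
    (P : PowerSeries k) (hP0 : PowerSeries.constantCoeff P = 0) (hP : P ≠ 0) :
    Irreducible (seriesInLastVar k n P -
      MvPowerSeries.monomial
        (∑ i : Fin m, Finsupp.single (Fin.castSucc (Fin.castLE hmn i)) (a i))
        (1 : k)) :=
  Stmt12.stmt_12_aux k m n hmn a hpos hgcd P hP0 hP
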